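/- Fix a positive integer k and real α with 0 ≤ α < 1. Define f₁ : [0,1) → ℝ by f₁(r) = r·2^{2α/k}·(1−r^k)^{−2α(3−2α)/k}·exp((1/k)·(4(1−α)(2−α)·r^k/(1−r^k) + (2α−1)·Li₂(r^k) + 2(1−α))) − 1, where Li₂(x) = ∑_{n=1}^∞ x^n/n². Then f₁(0) = −1, f₁(r) → +∞ as r → 1⁻, and f₁ has a unique zero in (0,1). -/
import Mathlib
open Filter Set

/-- The dilogarithm, given by its power series. -/
noncomputable def Li2 (x : ℝ) : ℝ := ∑' n : ℕ, x ^ (n + 1) / ((n + 1 : ℝ) ^ 2)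

lemma summable_geom' {x : ℝ} (h0 : 0 ≤ x) (h1 : x < 1) :
    Summable (fun n : ℕ => x ^ (n + 1)) := by
  have := (summable_geometric_of_lt_one h0 h1).mul_left x
  refine this.congr fun n => ?_
  ring

lemma tsum_geom' {x : ℝ} (h0 : 0 ≤ x) (h1 : x < 1) :
    ∑' n : ℕ, x ^ (n + 1) = x / (1 - x) := by
  have : ∑' n : ℕ, x ^ (n + 1) = ∑' n : ℕ, x * x ^ n := by
    refine tsum_congr fun n => ?_; ring
  rw [this, tsum_mul_left, tsum_geometric_of_lt_one h0 h1, div_eq_mul_inv]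

lemma summable_li2 {x : ℝ} (h0 : 0 ≤ x) (h1 : x < 1) :
    Summable (fun n : ℕ => x ^ (n + 1) / ((n + 1 : ℝ) ^ 2)) := by
  refine Summable.of_nonneg_of_le (fun n => by positivity) (fun n => ?_) (summable_geom' h0 h1)
  have h2 : (1:ℝ) ≤ ((n:ℝ) + 1) ^ 2 := by nlinarith [Nat.cast_nonneg (α := ℝ) n]
  calc x ^ (n+1) / ((n:ℝ)+1)^2 ≤ x ^ (n+1) / 1 := by
        apply div_le_div_of_nonneg_left (by positivity) one_pos h2
    _ = x ^ (n+1) := by ring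

lemma li2_nonneg {x : ℝ} (h0 : 0 ≤ x) : 0 ≤ Li2 x :=
  tsum_nonneg fun n => by positivity

lemma summable_base : Summable (fun n : ℕ => 1 / ((n + 1 : ℝ) ^ 2)) := by
  have : Summable (fun n : ℕ => 1 / ((n : ℝ) ^ 2)) := by
    simpa using Real.summable_one_div_nat_rpow.mpr (by norm_num : (1:ℝ) < 2)
  exact_mod_cast (summable_nat_add_iff 1).mpr this

lemma li2_le {x : ℝ} (h0 : 0 ≤ x) (h1 : x < 1) :
    Li2 x ≤ ∑' n : ℕ, 1 / ((n + 1 : ℝ) ^ 2) := by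
  refine Summable.tsum_le_tsum (fun n => ?_) (summable_li2 h0 h1) summable_base
  have hp : x ^ (n+1) ≤ 1 := pow_le_one₀ h0 h1.le
  gcongr

lemma li2_continuousAt {x : ℝ} (h0 : 0 ≤ x) (h1 : x < 1) : ContinuousAt Li2 x := by
  set ρ := (x + 1) / 2 with hρ
  have hxρ : x < ρ := by simp only [hρ]; linarith
  have hρ1 : ρ < 1 := by simp only [hρ]; linarith
  have hρ0 : 0 ≤ ρ := by simp only [hρ]; linarith
  have hco : ContinuousOn Li2 (Icc (-ρ) ρ) := by
    have := continuousOn_tsum (f := fun (n : ℕ) (y : ℝ) => y ^ (n+1) / ((n+1:ℝ)^2))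
      (s := Icc (-ρ) ρ) (u := fun n => ρ ^ (n+1))
      (fun n => (continuousOn_pow (n+1)).div_const _) (summable_geom' hρ0 hρ1) ?_
    · exact this
    · intro n y hy
      have hy' : |y| ≤ ρ := abs_le.mpr ⟨hy.1, hy.2⟩
      have h2 : (1:ℝ) ≤ ((n:ℝ) + 1) ^ 2 := by nlinarith [Nat.cast_nonneg (α := ℝ) n]
      rw [norm_div, norm_pow]
      calc ‖y‖ ^ (n+1) / ‖((n:ℝ)+1)^2‖ ≤ ρ ^ (n+1) / 1 := by
            apply div_le_div₀ (by positivity) (pow_le_pow_left₀ (abs_nonneg y) hy' _) one_pos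
            rw [Real.norm_eq_abs, abs_of_pos (by positivity)]; exact h2
        _ = ρ ^ (n+1) := by ring
  exact hco.continuousAt (Icc_mem_nhds (by linarith) hxρ)

lemma coeff_nonneg {α : ℝ} (hα0 : 0 ≤ α) (hα1 : α < 1) (n : ℕ) :
    0 ≤ 4 * (1 - α) * (2 - α) + (2 * α - 1) / ((n + 1 : ℝ) ^ 2) := by
  have hd : (1:ℝ) ≤ ((n:ℝ) + 1) ^ 2 := by nlinarith [Nat.cast_nonneg (α := ℝ) n]
  have hd0 : (0:ℝ) < ((n:ℝ) + 1) ^ 2 := by positivity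
  rcases le_or_gt (1/2 : ℝ) α with h | h
  · have h1 : 0 ≤ (2*α - 1) / ((n:ℝ)+1)^2 := div_nonneg (by linarith) hd0.le
    nlinarith
  · have h1 : -1 ≤ (2*α - 1) / (((n:ℝ)+1)^2) := by
      rw [le_div_iff₀ hd0]; nlinarith
    nlinarith

lemma rep (α : ℝ) {x : ℝ} (h0 : 0 ≤ x) (h1 : x < 1) :
    4 * (1 - α) * (2 - α) * x / (1 - x) + (2 * α - 1) * Li2 x =
      ∑' n : ℕ, (4 * (1 - α) * (2 - α) + (2 * α - 1) / ((n + 1 : ℝ) ^ 2)) * x ^ (n + 1) := by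
  have hg := summable_geom' h0 h1
  have hl := summable_li2 h0 h1
  have e1 : 4 * (1 - α) * (2 - α) * x / (1 - x)
      = ∑' n : ℕ, 4 * (1 - α) * (2 - α) * x ^ (n + 1) := by
    rw [tsum_mul_left, tsum_geom' h0 h1]; ring
  have e2 : (2 * α - 1) * Li2 x = ∑' n : ℕ, (2 * α - 1) * (x ^ (n+1) / ((n+1:ℝ)^2)) := by
    rw [tsum_mul_left]; rfl
  calc 4 * (1 - α) * (2 - α) * x / (1 - x) + (2 * α - 1) * Li2 x
      = (∑' n : ℕ, 4 * (1 - α) * (2 - α) * x ^ (n + 1))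
        + ∑' n : ℕ, (2 * α - 1) * (x ^ (n+1) / ((n+1:ℝ)^2)) := by rw [e1, e2]
    _ = ∑' n : ℕ, (4 * (1 - α) * (2 - α) * x ^ (n + 1)
          + (2 * α - 1) * (x ^ (n+1) / ((n+1:ℝ)^2))) :=
        (Summable.tsum_add (hg.mul_left _) (hl.mul_left _)).symm
    _ = _ := tsum_congr fun n => by ring

lemma summable_rep (α : ℝ) {x : ℝ} (h0 : 0 ≤ x) (h1 : x < 1) :
    Summable (fun n : ℕ => (4 * (1 - α) * (2 - α) + (2 * α - 1) / ((n + 1 : ℝ) ^ 2)) * x ^ (n + 1)) := by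
  have hg := summable_geom' h0 h1
  have hl := summable_li2 h0 h1
  exact ((hg.mul_left (4 * (1 - α) * (2 - α))).add
    (hl.mul_left (2 * α - 1))).congr fun n => by ring

lemma aux_mono {α : ℝ} (hα0 : 0 ≤ α) (hα1 : α < 1) {x y : ℝ} (hx : 0 ≤ x) (hxy : x ≤ y)
    (hy : y < 1) :
    4 * (1 - α) * (2 - α) * x / (1 - x) + (2 * α - 1) * Li2 x ≤
      4 * (1 - α) * (2 - α) * y / (1 - y) + (2 * α - 1) * Li2 y := by
  have hx1 : x < 1 := lt_of_le_of_lt hxy hy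
  have hy0 : 0 ≤ y := hx.trans hxy
  rw [rep α hx hx1, rep α hy0 hy]
  refine Summable.tsum_le_tsum (fun n => ?_) (summable_rep α hx hx1) (summable_rep α hy0 hy)
  exact mul_le_mul_of_nonneg_left (pow_le_pow_left₀ hx hxy _) (coeff_nonneg hα0 hα1 n)

theorem stmt_3 (k : ℕ) (hk : 0 < k) (α : ℝ) (hα0 : 0 ≤ α) (hα1 : α < 1)
    (f₁ : ℝ → ℝ)
    (hf₁ : ∀ r : ℝ, f₁ r =
      r * (2 : ℝ) ^ (2 * α / k) * (1 - r ^ k) ^ (-(2 * α * (3 - 2 * α)) / k) *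
        Real.exp ((1 / k) * (4 * (1 - α) * (2 - α) * r ^ k / (1 - r ^ k)
          + (2 * α - 1) * Li2 (r ^ k) + 2 * (1 - α))) - 1) :
    f₁ 0 = -1 ∧
    Filter.Tendsto f₁ (nhdsWithin 1 (Set.Iio 1)) Filter.atTop ∧
    ∃! r : ℝ, r ∈ Set.Ioo (0 : ℝ) 1 ∧ f₁ r = 0 := by
  have hk' : (0:ℝ) < (k:ℝ) := by exact_mod_cast hk
  have hkinv : (0:ℝ) < 1 / (k:ℝ) := by positivity
  have hCpos : (0:ℝ) < 4 * (1 - α) * (2 - α) := by nlinarith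
  have hepow : -(2 * α * (3 - 2 * α)) / (k:ℝ) ≤ 0 := by
    apply div_nonpos_of_nonpos_of_nonneg _ hk'.le
    nlinarith
  -- positivity and bounds for points in [0,1)
  have hbase : ∀ r : ℝ, 0 ≤ r → r < 1 → 0 < 1 - r ^ k := by
    intro r h0 h1
    have := pow_lt_one₀ h0 h1 hk.ne'
    linarith
  -- strict monotonicity on [0,1)
  have hmono : ∀ r₁ r₂ : ℝ, 0 ≤ r₁ → r₁ < r₂ → r₂ < 1 → f₁ r₁ < f₁ r₂ := by
    intro r₁ r₂ h0 h12 h21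
    have h1lt : r₁ < 1 := h12.trans h21
    have h20 : 0 ≤ r₂ := h0.trans h12.le
    have hb1 := hbase r₁ h0 h1lt
    have hb2 := hbase r₂ h20 h21
    have hxk : r₁ ^ k ≤ r₂ ^ k := pow_le_pow_left₀ h0 h12.le k
    rw [hf₁ r₁, hf₁ r₂]
    have hB : (1 - r₁ ^ k) ^ (-(2 * α * (3 - 2 * α)) / (k:ℝ)) ≤
        (1 - r₂ ^ k) ^ (-(2 * α * (3 - 2 * α)) / (k:ℝ)) :=
      Real.rpow_le_rpow_of_nonpos hb2 (by linarith) hepow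
    have hE : Real.exp ((1 / k) * (4 * (1 - α) * (2 - α) * r₁ ^ k / (1 - r₁ ^ k)
          + (2 * α - 1) * Li2 (r₁ ^ k) + 2 * (1 - α))) ≤
        Real.exp ((1 / k) * (4 * (1 - α) * (2 - α) * r₂ ^ k / (1 - r₂ ^ k)
          + (2 * α - 1) * Li2 (r₂ ^ k) + 2 * (1 - α))) := by
      apply Real.exp_le_exp.mpr
      apply mul_le_mul_of_nonneg_left _ hkinv.le
      have := aux_mono hα0 hα1 (pow_nonneg h0 k) hxk (by nlinarith [pow_lt_one₀ h20 h21 hk.ne'])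
      linarith
    have hP : (0:ℝ) < (2 : ℝ) ^ (2 * α / (k:ℝ)) := Real.rpow_pos_of_pos (by norm_num) _
    have hB1 : (0:ℝ) < (1 - r₁ ^ k) ^ (-(2 * α * (3 - 2 * α)) / (k:ℝ)) :=
      Real.rpow_pos_of_pos hb1 _
    have hE1 : (0:ℝ) < Real.exp ((1 / k) * (4 * (1 - α) * (2 - α) * r₁ ^ k / (1 - r₁ ^ k)
          + (2 * α - 1) * Li2 (r₁ ^ k) + 2 * (1 - α))) := Real.exp_pos _
    have hB2 : (0:ℝ) < (1 - r₂ ^ k) ^ (-(2 * α * (3 - 2 * α)) / (k:ℝ)) :=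
      Real.rpow_pos_of_pos hb2 _
    have hE2 : (0:ℝ) < Real.exp ((1 / k) * (4 * (1 - α) * (2 - α) * r₂ ^ k / (1 - r₂ ^ k)
          + (2 * α - 1) * Li2 (r₂ ^ k) + 2 * (1 - α))) := Real.exp_pos _
    have step1 : r₁ * (2 : ℝ) ^ (2 * α / (k:ℝ)) *
          (1 - r₁ ^ k) ^ (-(2 * α * (3 - 2 * α)) / (k:ℝ)) *
        Real.exp ((1 / k) * (4 * (1 - α) * (2 - α) * r₁ ^ k / (1 - r₁ ^ k)
          + (2 * α - 1) * Li2 (r₁ ^ k) + 2 * (1 - α))) ≤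
        r₁ * (2 : ℝ) ^ (2 * α / (k:ℝ)) *
          (1 - r₂ ^ k) ^ (-(2 * α * (3 - 2 * α)) / (k:ℝ)) *
        Real.exp ((1 / k) * (4 * (1 - α) * (2 - α) * r₂ ^ k / (1 - r₂ ^ k)
          + (2 * α - 1) * Li2 (r₂ ^ k) + 2 * (1 - α))) := by
      apply mul_le_mul (mul_le_mul_of_nonneg_left hB (by positivity)) hE hE1.le
      positivity
    have step2 : r₁ * (2 : ℝ) ^ (2 * α / (k:ℝ)) *
          (1 - r₂ ^ k) ^ (-(2 * α * (3 - 2 * α)) / (k:ℝ)) *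
        Real.exp ((1 / k) * (4 * (1 - α) * (2 - α) * r₂ ^ k / (1 - r₂ ^ k)
          + (2 * α - 1) * Li2 (r₂ ^ k) + 2 * (1 - α))) <
        r₂ * (2 : ℝ) ^ (2 * α / (k:ℝ)) *
          (1 - r₂ ^ k) ^ (-(2 * α * (3 - 2 * α)) / (k:ℝ)) *
        Real.exp ((1 / k) * (4 * (1 - α) * (2 - α) * r₂ ^ k / (1 - r₂ ^ k)
          + (2 * α - 1) * Li2 (r₂ ^ k) + 2 * (1 - α))) := by
      apply mul_lt_mul_of_pos_right _ hE2
      apply mul_lt_mul_of_pos_right _ hB2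
      exact mul_lt_mul_of_pos_right h12 hP
    linarith
  have hzero : f₁ 0 = -1 := by rw [hf₁ 0]; simp
  have hev : ∀ᶠ r in nhdsWithin (1:ℝ) (Iio 1), r ∈ Ioo (0:ℝ) 1 :=
    Ioo_mem_nhdsLT_of_mem (by norm_num : (1:ℝ) ∈ Ioc (0:ℝ) 1)
  set M := ∑' n : ℕ, 1 / ((n + 1 : ℝ) ^ 2) with hMdef
  have hM0 : 0 ≤ M := tsum_nonneg fun n => by positivity
  -- lower bound for f₁ on Ioo 0 1
  have hlow : ∀ r : ℝ, r ∈ Ioo (0:ℝ) 1 →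
      r * Real.exp ((1/(k:ℝ)) * (4 * (1 - α) * (2 - α) * (r ^ k * (1 - r ^ k)⁻¹) + -M)) + -1
        ≤ f₁ r := by
    intro r hr
    have h0 := hr.1
    have h1 := hr.2
    have hb := hbase r h0.le h1
    have hxk : r ^ k < 1 := pow_lt_one₀ h0.le h1 hk.ne'
    have hxk0 : 0 ≤ r ^ k := pow_nonneg h0.le k
    have hP1 : (1:ℝ) ≤ (2 : ℝ) ^ (2 * α / (k:ℝ)) :=
      Real.one_le_rpow one_le_two (by positivity)
    have hB1 : (1:ℝ) ≤ (1 - r ^ k) ^ (-(2 * α * (3 - 2 * α)) / (k:ℝ)) :=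
      Real.one_le_rpow_of_pos_of_le_one_of_nonpos hb (by linarith) hepow
    have hLi0 : 0 ≤ Li2 (r ^ k) := li2_nonneg hxk0
    have hLiM : Li2 (r ^ k) ≤ M := li2_le hxk0 hxk
    have hElow : Real.exp ((1/(k:ℝ)) *
          (4 * (1 - α) * (2 - α) * (r ^ k * (1 - r ^ k)⁻¹) + -M)) ≤
        Real.exp ((1 / k) * (4 * (1 - α) * (2 - α) * r ^ k / (1 - r ^ k)
          + (2 * α - 1) * Li2 (r ^ k) + 2 * (1 - α))) := by
      apply Real.exp_le_exp.mpr
      apply mul_le_mul_of_nonneg_left _ hkinv.le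
      have heq : 4 * (1 - α) * (2 - α) * (r ^ k * (1 - r ^ k)⁻¹)
          = 4 * (1 - α) * (2 - α) * r ^ k / (1 - r ^ k) := by ring
      rw [heq]
      nlinarith [mul_nonneg hα0 hLi0]
    have hchain : r * Real.exp ((1/(k:ℝ)) *
          (4 * (1 - α) * (2 - α) * (r ^ k * (1 - r ^ k)⁻¹) + -M)) ≤
        r * (2 : ℝ) ^ (2 * α / (k:ℝ)) * (1 - r ^ k) ^ (-(2 * α * (3 - 2 * α)) / (k:ℝ)) *
        Real.exp ((1 / k) * (4 * (1 - α) * (2 - α) * r ^ k / (1 - r ^ k)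
          + (2 * α - 1) * Li2 (r ^ k) + 2 * (1 - α))) := by
      have hr1 : r ≤ r * (2 : ℝ) ^ (2 * α / (k:ℝ)) := le_mul_of_one_le_right h0.le hP1
      have hr2 : r * (2 : ℝ) ^ (2 * α / (k:ℝ)) ≤
          r * (2 : ℝ) ^ (2 * α / (k:ℝ)) * (1 - r ^ k) ^ (-(2 * α * (3 - 2 * α)) / (k:ℝ)) :=
        le_mul_of_one_le_right (by positivity) hB1
      exact mul_le_mul (hr1.trans hr2) hElow (Real.exp_pos _).le (by positivity)
    rw [hf₁ r]
    linarith
  -- tendsto of the minorant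
  have htend : Filter.Tendsto f₁ (nhdsWithin 1 (Set.Iio 1)) Filter.atTop := by
    have t1 : Tendsto (fun r : ℝ => 1 - r ^ k) (nhdsWithin 1 (Iio 1))
        (nhdsWithin 0 (Ioi 0)) := by
      rw [tendsto_nhdsWithin_iff]
      constructor
      · have h : Tendsto (fun r : ℝ => 1 - r ^ k) (nhdsWithin 1 (Iio 1))
            (nhds (1 - (1:ℝ) ^ k)) :=
          (((continuous_const (y := (1:ℝ))).sub (continuous_pow k)).tendsto (1:ℝ)).mono_left
            nhdsWithin_le_nhds
        simpa using h
      · filter_upwards [hev] with r hr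
        exact mem_Ioi.mpr (hbase r hr.1.le hr.2)
    have tk : Tendsto (fun r : ℝ => r ^ k) (nhdsWithin 1 (Iio 1)) (nhds 1) := by
      have h : Tendsto (fun r : ℝ => r ^ k) (nhdsWithin 1 (Iio 1)) (nhds ((1:ℝ) ^ k)) :=
        ((continuous_pow k).tendsto (1:ℝ)).mono_left nhdsWithin_le_nhds
      simpa using h
    have t2 : Tendsto (fun r : ℝ => r ^ k * (1 - r ^ k)⁻¹) (nhdsWithin 1 (Iio 1)) atTop :=
      Tendsto.pos_mul_atTop one_pos tk (tendsto_inv_nhdsGT_zero.comp t1)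
    have t3 := Tendsto.const_mul_atTop hCpos t2
    have t4 := tendsto_atTop_add_const_right _ (-M) t3
    have t5 := Tendsto.const_mul_atTop hkinv t4
    have t6 := Real.tendsto_exp_atTop.comp t5
    have tid : Tendsto (fun r : ℝ => r) (nhdsWithin 1 (Iio 1)) (nhds 1) :=
      tendsto_id.mono_right nhdsWithin_le_nhds
    have t7 := Tendsto.pos_mul_atTop one_pos tid t6
    have t8 := tendsto_atTop_add_const_right _ (-1 : ℝ) t7
    refine tendsto_atTop_mono' _ ?_ t8
    filter_upwards [hev] with r hr
    exact hlow r hr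
  -- continuity on [0,1)
  have hcont : ∀ r : ℝ, 0 ≤ r → r < 1 → ContinuousAt f₁ r := by
    intro r h0 h1
    have hfe : f₁ = fun r : ℝ =>
        r * (2 : ℝ) ^ (2 * α / k) * (1 - r ^ k) ^ (-(2 * α * (3 - 2 * α)) / k) *
          Real.exp ((1 / k) * (4 * (1 - α) * (2 - α) * r ^ k / (1 - r ^ k)
            + (2 * α - 1) * Li2 (r ^ k) + 2 * (1 - α))) - 1 := funext hf₁
    rw [hfe]
    have hxk1 : r ^ k < 1 := pow_lt_one₀ h0 h1 hk.ne'
    have hb := hbase r h0 h1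
    have c1 : ContinuousAt (fun r : ℝ => r ^ k) r := (continuous_pow k).continuousAt
    have c2 : ContinuousAt (fun r : ℝ => 1 - r ^ k) r :=
      (continuous_const.sub (continuous_pow k)).continuousAt
    have c3 : ContinuousAt (fun r : ℝ => (1 - r ^ k) ^ (-(2 * α * (3 - 2 * α)) / (k:ℝ))) r :=
      c2.rpow_const (Or.inl hb.ne')
    have cLi : ContinuousAt (fun r : ℝ => Li2 (r ^ k)) r :=
      ContinuousAt.comp (g := Li2) (f := fun r : ℝ => r ^ k)
        (li2_continuousAt (pow_nonneg h0 k) hxk1) c1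
    have cdiv : ContinuousAt (fun r : ℝ => 4 * (1 - α) * (2 - α) * r ^ k / (1 - r ^ k)) r :=
      (continuousAt_const.mul c1).div c2 hb.ne'
    have carg : ContinuousAt (fun r : ℝ => (1 / (k:ℝ)) *
        (4 * (1 - α) * (2 - α) * r ^ k / (1 - r ^ k)
          + (2 * α - 1) * Li2 (r ^ k) + 2 * (1 - α))) r :=
      continuousAt_const.mul ((cdiv.add (continuousAt_const.mul cLi)).add continuousAt_const)
    exact (((continuousAt_id.mul continuousAt_const).mul c3).mul
      (Real.continuous_exp.continuousAt.comp carg)).sub continuousAt_const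
  refine ⟨hzero, htend, ?_⟩
  -- existence via IVT
  obtain ⟨b, hb1, hb2⟩ := ((htend.eventually_gt_atTop 0).and hev).exists
  have hcontOn : ContinuousOn f₁ (Icc 0 b) := fun r hr =>
    (hcont r hr.1 (lt_of_le_of_lt hr.2 hb2.2)).continuousWithinAt
  have h0mem : (0:ℝ) ∈ Ioo (f₁ 0) (f₁ b) := by
    rw [hzero]; exact ⟨by norm_num, hb1⟩
  obtain ⟨r, hr, hfr⟩ := intermediate_value_Ioo hb2.1.le hcontOn h0mem
  have hr1 : r < 1 := hr.2.trans hb2.2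
  refine ⟨r, ⟨⟨hr.1, hr1⟩, hfr⟩, ?_⟩
  rintro r' ⟨⟨h'0, h'1⟩, hf'⟩
  by_contra hne
  rcases lt_or_gt_of_ne hne with h | h
  · have := hmono r' r h'0.le h hr1
    rw [hf', hfr] at this
    exact lt_irrefl 0 this
  · have := hmono r r' hr.1.le h h'1
    rw [hf', hfr] at this
    exact lt_irrefl 0 this
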